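/- arXiv:math/0602168 — 2 statements merged into one kernel-verified Lean document; each statement's English description precedes it below -/
import Mathlib

section
/- Let j_a and j_b be compatible positive complex structures on (E, ω). Then E ⊗ ℂ is the internal direct sum of E^{1,0}_{j_a} and E^{0,1}_{j_b}; that is, E^{1,0}_{j_a} ∩ E^{0,1}_{j_b} = 0 and E^{1,0}_{j_a} + E^{0,1}_{j_b} = E ⊗ ℂ. -/
open Complex TensorProduct

noncomputable section

variable {E : Type*} [AddCommGroup E] [Module ℝ E]

/-- `j` is a complex structure on `E`: `j ∘ j = -id`. -/
def IsCplxStruct (j : E →ₗ[ℝ] E) : Prop := ∀ x : E, j (j x) = -x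

/-- `j` is compatible with the symplectic form `ω`. -/
def OmCompat (ω : LinearMap.BilinForm ℝ E) (j : E →ₗ[ℝ] E) : Prop :=
  ∀ x y : E, ω (j x) (j y) = ω x y

/-- `j` is positive with respect to `ω`. -/
def OmPos (ω : LinearMap.BilinForm ℝ E) (j : E →ₗ[ℝ] E) : Prop :=
  ∀ x : E, x ≠ 0 → 0 < ω x (j x)

/-- `ω` is alternating. -/
def OmAlt (ω : LinearMap.BilinForm ℝ E) : Prop := ∀ x : E, ω x x = 0

/-- `ω` is nondegenerate. -/
def OmNondeg (ω : LinearMap.BilinForm ℝ E) : Prop :=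
  ∀ x : E, (∀ y : E, ω x y = 0) → x = 0

/-- The `ℂ`-linear extension of `j` to the complexification `ℂ ⊗[ℝ] E`. -/
def cplxExt (j : E →ₗ[ℝ] E) : Module.End ℂ (ℂ ⊗[ℝ] E) := j.baseChange ℂ

/-- `E^{1,0}_j`: the `i`-eigenspace of the `ℂ`-linear extension of `j`. -/
def E10 (j : E →ₗ[ℝ] E) : Submodule ℂ (ℂ ⊗[ℝ] E) :=
  Module.End.eigenspace (cplxExt j) Complex.I

/-- `E^{0,1}_j`: the `(-i)`-eigenspace of the `ℂ`-linear extension of `j`. -/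
def E01 (j : E →ₗ[ℝ] E) : Submodule ℂ (ℂ ⊗[ℝ] E) :=
  Module.End.eigenspace (cplxExt j) (-Complex.I)

/-- `Λ^{1,0}_j E*`: `ℂ`-valued `ℝ`-linear forms with `α (j v) = i · α v`. -/
def Lam10 (j : E →ₗ[ℝ] E) : Submodule ℂ (E →ₗ[ℝ] ℂ) where
  carrier := {α | ∀ x : E, α (j x) = Complex.I * α x}
  add_mem' := by
    intro a b ha hb x
    simp only [LinearMap.add_apply, ha x, hb x]; ring
  zero_mem' := by intro x; simp
  smul_mem' := by
    intro c a ha x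
    simp only [LinearMap.smul_apply, ha x, smul_eq_mul]; ring

/-- `Λ^{0,1}_j E*`: `ℂ`-valued `ℝ`-linear forms with `α (j v) = -i · α v`. -/
def Lam01 (j : E →ₗ[ℝ] E) : Submodule ℂ (E →ₗ[ℝ] ℂ) where
  carrier := {α | ∀ x : E, α (j x) = -(Complex.I * α x)}
  add_mem' := by
    intro a b ha hb x
    simp only [LinearMap.add_apply, ha x, hb x]; ring
  zero_mem' := by intro x; simp
  smul_mem' := by
    intro c a ha x
    simp only [LinearMap.smul_apply, ha x, smul_eq_mul]; ring

/-- The `ℂ`-linear extension of a `ℂ`-valued `ℝ`-linear form to `ℂ ⊗[ℝ] E`. -/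
def extendC (α : E →ₗ[ℝ] ℂ) : (ℂ ⊗[ℝ] E) →ₗ[ℂ] ℂ :=
  TensorProduct.AlgebraTensorModule.lift (LinearMap.toSpanSingleton ℂ (E →ₗ[ℝ] ℂ) α)

/-- The `ℂ`-bilinear extension of `ω` to `ℂ ⊗[ℝ] E`. -/
def omC (ω : LinearMap.BilinForm ℝ E) : LinearMap.BilinForm ℂ (ℂ ⊗[ℝ] E) :=
  ω.baseChange ℂ

/-- Complex conjugation on `ℂ ⊗[ℝ] E`. -/
def conjTensor : (ℂ ⊗[ℝ] E) →ₗ[ℝ] (ℂ ⊗[ℝ] E) :=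
  TensorProduct.map Complex.conjAe.toLinearMap LinearMap.id

/-- The conjugate of a `ℂ`-valued `ℝ`-linear form. -/
def conjForm (α : E →ₗ[ℝ] ℂ) : E →ₗ[ℝ] ℂ :=
  Complex.conjAe.toLinearMap ∘ₗ α

/-- Real part map on the complexification. -/
def reT (E : Type*) [AddCommGroup E] [Module ℝ E] : ℂ ⊗[ℝ] E →ₗ[ℝ] E :=
  TensorProduct.lift ((LinearMap.lsmul ℝ E).comp Complex.reLm)

/-- Imaginary part map on the complexification. -/
def imT (E : Type*) [AddCommGroup E] [Module ℝ E] : ℂ ⊗[ℝ] E →ₗ[ℝ] E :=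
  TensorProduct.lift ((LinearMap.lsmul ℝ E).comp Complex.imLm)

lemma reT_tmul (c : ℂ) (x : E) : reT E (c ⊗ₜ[ℝ] x) = c.re • x := rfl

lemma imT_tmul (c : ℂ) (x : E) : imT E (c ⊗ₜ[ℝ] x) = c.im • x := rfl

lemma tmul_reT_add_imT (v : ℂ ⊗[ℝ] E) :
    (1 : ℂ) ⊗ₜ[ℝ] (reT E v) + Complex.I ⊗ₜ[ℝ] (imT E v) = v := by
  induction v using TensorProduct.induction_on with
  | zero => simp
  | tmul c x =>
      rw [reT_tmul, imT_tmul, TensorProduct.tmul_smul, TensorProduct.tmul_smul,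
        TensorProduct.smul_tmul', TensorProduct.smul_tmul', ← TensorProduct.add_tmul]
      congr 1
      simp [Complex.real_smul]
  | add x y hx hy =>
      simp only [map_add, TensorProduct.tmul_add]
      rw [add_add_add_comm, hx, hy]

lemma reT_cplxExt (j : E →ₗ[ℝ] E) (v : ℂ ⊗[ℝ] E) :
    reT E (cplxExt j v) = j (reT E v) := by
  induction v using TensorProduct.induction_on with
  | zero => simp
  | tmul c x => simp [cplxExt, reT_tmul]
  | add x y hx hy => simp only [map_add, hx, hy]

lemma imT_cplxExt (j : E →ₗ[ℝ] E) (v : ℂ ⊗[ℝ] E) :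
    imT E (cplxExt j v) = j (imT E v) := by
  induction v using TensorProduct.induction_on with
  | zero => simp
  | tmul c x => simp [cplxExt, imT_tmul]
  | add x y hx hy => simp only [map_add, hx, hy]

lemma reT_I_smul (v : ℂ ⊗[ℝ] E) : reT E (Complex.I • v) = - imT E v := by
  induction v using TensorProduct.induction_on with
  | zero => simp
  | tmul c x =>
      rw [TensorProduct.smul_tmul', smul_eq_mul, reT_tmul, imT_tmul]
      simp
  | add x y hx hy => simp only [smul_add, map_add, hx, hy, neg_add]

lemma imT_I_smul (v : ℂ ⊗[ℝ] E) : imT E (Complex.I • v) = reT E v := by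
  induction v using TensorProduct.induction_on with
  | zero => simp
  | tmul c x =>
      rw [TensorProduct.smul_tmul', smul_eq_mul, imT_tmul, reT_tmul]
      simp
  | add x y hx hy => simp only [smul_add, map_add, hx, hy]

lemma cplxExt_cplxExt {j : E →ₗ[ℝ] E} (hj : IsCplxStruct j) (v : ℂ ⊗[ℝ] E) :
    cplxExt j (cplxExt j v) = -v := by
  induction v using TensorProduct.induction_on with
  | zero => simp
  | tmul c x => simp [cplxExt, hj x, TensorProduct.tmul_neg]
  | add x y hx hy => simp only [map_add, hx, hy, neg_add]

/-- Triviality of the mixed intersection. -/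
lemma inf_bot_aux (ω : LinearMap.BilinForm ℝ E) (ja jb : E →ₗ[ℝ] E)
    (hpa : OmPos ω ja) (hpb : OmPos ω jb) : E10 ja ⊓ E01 jb = ⊥ := by
  rw [eq_bot_iff]
  rintro v ⟨hm1, hm2⟩
  rw [Submodule.mem_bot]
  have h1 : cplxExt ja v = Complex.I • v := Module.End.mem_eigenspace_iff.mp hm1
  have h2 : cplxExt jb v = (-Complex.I) • v := Module.End.mem_eigenspace_iff.mp hm2
  set x := reT E v with hxdef
  set y := imT E v with hydef
  have e1 : ja x = -y := by
    have := congrArg (reT E) h1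
    rwa [reT_cplxExt, reT_I_smul, ← hxdef, ← hydef] at this
  have e2 : jb x = y := by
    have := congrArg (reT E) h2
    rw [reT_cplxExt, neg_smul, map_neg, reT_I_smul, neg_neg, ← hxdef, ← hydef] at this
    exact this
  have hx0 : x = 0 := by
    by_contra hx
    have p1 := hpa x hx
    have p2 := hpb x hx
    rw [e1] at p1
    rw [e2] at p2
    simp only [map_neg] at p1
    linarith
  have hy0 : y = 0 := by
    have := e1
    rw [hx0, map_zero] at this
    simpa using this.symm
  have := tmul_reT_add_imT v
  rw [← hxdef, ← hydef, hx0, hy0] at this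
  simp only [TensorProduct.tmul_zero, add_zero] at this
  exact this.symm

/-- Same-`j` decomposition. -/
lemma isCompl_E10_E01 {j : E →ₗ[ℝ] E} (hj : IsCplxStruct j) :
    E10 j ⊓ E01 j = ⊥ ∧ E10 j ⊔ E01 j = ⊤ := by
  constructor
  · rw [eq_bot_iff]
    rintro v ⟨hm1, hm2⟩
    have h1 : cplxExt j v = Complex.I • v := Module.End.mem_eigenspace_iff.mp hm1
    have h2 : cplxExt j v = (-Complex.I) • v := Module.End.mem_eigenspace_iff.mp hm2
    rw [Submodule.mem_bot]
    have : (Complex.I - -Complex.I) • v = 0 := by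
      rw [sub_smul, h1.symm.trans h2]; simp
    have hne : (Complex.I - -Complex.I) ≠ 0 := by
      simp [Complex.ext_iff]
    exact (smul_eq_zero.mp this).resolve_left hne
  · rw [eq_top_iff]
    intro v _
    set a := (2 : ℂ)⁻¹ • (v - Complex.I • cplxExt j v) with ha
    set b := (2 : ℂ)⁻¹ • (v + Complex.I • cplxExt j v) with hb
    have hav : a + b = v := by
      rw [ha, hb, ← smul_add]
      rw [sub_add_add_cancel, ← two_smul ℂ v, smul_smul]
      norm_num
    have hvv := cplxExt_cplxExt hj v
    have haE : a ∈ E10 j := by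
      have heq : cplxExt j a = Complex.I • a := by
        rw [ha, map_smul, map_sub, map_smul, hvv]
        match_scalars <;> (ring_nf; try norm_num [Complex.I_sq])
      exact Module.End.mem_eigenspace_iff.mpr heq
    have hbE : b ∈ E01 j := by
      have heq : cplxExt j b = (-Complex.I) • b := by
        rw [hb, map_smul, map_add, map_smul, hvv]
        match_scalars <;> (ring_nf; try norm_num [Complex.I_sq])
      exact Module.End.mem_eigenspace_iff.mpr heq
    rw [← hav]
    exact Submodule.add_mem_sup haE hbE

/-- `E ⊗ ℂ` is the internal direct sum of `E^{1,0}_{j_a}` and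
`E^{0,1}_{j_b}`. -/
theorem statement7 {E : Type*} [AddCommGroup E] [Module ℝ E] [FiniteDimensional ℝ E]
    (n : ℕ) (hn : 0 < n) (ω : LinearMap.BilinForm ℝ E)
    (hdim : Module.finrank ℝ E = 2 * n)
    (halt : OmAlt ω) (hnd : OmNondeg ω)
    (ja jb : E →ₗ[ℝ] E) (hja : IsCplxStruct ja) (hjb : IsCplxStruct jb)
    (hca : OmCompat ω ja) (hcb : OmCompat ω jb)
    (hpa : OmPos ω ja) (hpb : OmPos ω jb) :
    E10 ja ⊓ E01 jb = ⊥ ∧ E10 ja ⊔ E01 jb = ⊤ := by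
  have hinf1 : E10 ja ⊓ E01 jb = ⊥ := inf_bot_aux ω ja jb hpa hpb
  have hinf2 : E10 jb ⊓ E01 ja = ⊥ := inf_bot_aux ω jb ja hpb hpa
  refine ⟨hinf1, ?_⟩
  have hfin : FiniteDimensional ℂ (ℂ ⊗[ℝ] E) := inferInstance
  have key : ∀ j : E →ₗ[ℝ] E, IsCplxStruct j →
      Module.finrank ℂ (E10 j) + Module.finrank ℂ (E01 j)
        = Module.finrank ℂ (ℂ ⊗[ℝ] E) := by
    intro j hj
    obtain ⟨h1, h2⟩ := isCompl_E10_E01 hj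
    have := Submodule.finrank_sup_add_finrank_inf_eq (E10 j) (E01 j)
    rw [h1, h2] at this
    simpa [finrank_top] using this.symm
  have ha := key ja hja
  have hb := key jb hjb
  have h1 : Module.finrank ℂ ↥(E10 ja ⊔ E01 jb)
      = Module.finrank ℂ (E10 ja) + Module.finrank ℂ (E01 jb) := by
    have := Submodule.finrank_sup_add_finrank_inf_eq (E10 ja) (E01 jb)
    rw [hinf1] at this
    simpa using this
  have h2 : Module.finrank ℂ ↥(E10 jb ⊔ E01 ja)
      = Module.finrank ℂ (E10 jb) + Module.finrank ℂ (E01 ja) := by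
    have := Submodule.finrank_sup_add_finrank_inf_eq (E10 jb) (E01 ja)
    rw [hinf2] at this
    simpa using this
  have le1 : Module.finrank ℂ ↥(E10 ja ⊔ E01 jb) ≤ Module.finrank ℂ (ℂ ⊗[ℝ] E) :=
    Submodule.finrank_le _
  have le2 : Module.finrank ℂ ↥(E10 jb ⊔ E01 ja) ≤ Module.finrank ℂ (ℂ ⊗[ℝ] E) :=
    Submodule.finrank_le _
  have heq : Module.finrank ℂ ↥(E10 ja ⊔ E01 jb) = Module.finrank ℂ (ℂ ⊗[ℝ] E) := by
    omega
  exact Submodule.eq_top_of_finrank_eq heq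

end
end

section
/- Let j₀ be a compatible positive complex structure on (E, ω) and let j be any complex structure on E such that Λ^{1,0}_j E*, viewed inside E* ⊗ ℂ = Λ^{1,0}_{j₀}E* ⊕ Λ^{0,1}_{j₀}E*, is the graph of a ℂ-linear map μ : Λ^{1,0}_{j₀}E* → Λ^{0,1}_{j₀}E*. Then j is compatible with ω if and only if ω(μᵗX, Y) + ω(X, μᵗY) = 0 for all X, Y ∈ E^{0,1}_{j₀}, where ω is extended ℂ-bilinearly to E ⊗ ℂ and μᵗ : E^{0,1}_{j₀} → E^{1,0}_{j₀} is the transpose of μ, characterized by α(μᵗ(X)) = (μ(α))(X) for all α ∈ Λ^{1,0}_{j₀}E* and X ∈ E^{0,1}_{j₀}. -/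
open Complex TensorProduct

noncomputable section

variable {E : Type*} [AddCommGroup E] [Module ℝ E]

-- ### helper lemmas

lemma cplxExt_tmul (j : E →ₗ[ℝ] E) (c : ℂ) (x : E) : cplxExt j (c ⊗ₜ x) = c ⊗ₜ j x := by
  simp [cplxExt]

lemma extendC_tmul (α : E →ₗ[ℝ] ℂ) (c : ℂ) (x : E) : extendC α (c ⊗ₜ x) = c * α x := by
  simp [extendC, LinearMap.toSpanSingleton]

lemma omC_tmul (ω : LinearMap.BilinForm ℝ E) (a b : ℂ) (x y : E) :
    omC ω (a ⊗ₜ x) (b ⊗ₜ y) = (ω x y : ℂ) * (a * b) := by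
  simp [omC]

lemma extendC_add (α β : E →ₗ[ℝ] ℂ) (Z : ℂ ⊗[ℝ] E) :
    extendC (α + β) Z = extendC α Z + extendC β Z := by
  induction Z using TensorProduct.induction_on with
  | zero => simp
  | tmul c x => simp [extendC_tmul]; ring
  | add u v hu hv => simp only [map_add, hu, hv]; ring

lemma cplxExt_sq {j : E →ₗ[ℝ] E} (hj : IsCplxStruct j) (Z : ℂ ⊗[ℝ] E) :
    cplxExt j (cplxExt j Z) = -Z := by
  induction Z using TensorProduct.induction_on with
  | zero => simp
  | tmul c x => simp [cplxExt_tmul, hj x, TensorProduct.tmul_neg]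
  | add u v hu hv => simp only [map_add, hu, hv]; abel

lemma mem_E10 {j : E →ₗ[ℝ] E} {Z : ℂ ⊗[ℝ] E} :
    Z ∈ E10 j ↔ cplxExt j Z = Complex.I • Z := Module.End.mem_eigenspace_iff

lemma mem_E01 {j : E →ₗ[ℝ] E} {Z : ℂ ⊗[ℝ] E} :
    Z ∈ E01 j ↔ cplxExt j Z = -(Complex.I • Z) := by
  rw [E01, Module.End.mem_eigenspace_iff, neg_smul]

/-- decomposition of the complexification into eigenspaces -/
lemma decomp {j : E →ₗ[ℝ] E} (hj : IsCplxStruct j) (Z : ℂ ⊗[ℝ] E) :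
    ∃ U ∈ E10 j, ∃ V ∈ E01 j, Z = U + V := by
  refine ⟨(2⁻¹ : ℂ) • (Z - Complex.I • cplxExt j Z), ?_,
      (2⁻¹ : ℂ) • (Z + Complex.I • cplxExt j Z), ?_, ?_⟩
  · rw [mem_E10]
    simp only [map_smul, map_sub, map_smul, cplxExt_sq hj]
    match_scalars <;> (first | ring1 | linear_combination (-1/2 : ℂ) * Complex.I_sq | linear_combination (1/2 : ℂ) * Complex.I_sq)
  · rw [mem_E01]
    simp only [map_smul, map_add, map_smul, cplxExt_sq hj]
    match_scalars <;> (first | ring1 | linear_combination (-1/2 : ℂ) * Complex.I_sq | linear_combination (1/2 : ℂ) * Complex.I_sq)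
  · module

lemma extendC_cplxExt {j : E →ₗ[ℝ] E} {α : E →ₗ[ℝ] ℂ} (hα : α ∈ Lam10 j) (Z : ℂ ⊗[ℝ] E) :
    extendC α (cplxExt j Z) = Complex.I * extendC α Z := by
  induction Z using TensorProduct.induction_on with
  | zero => simp
  | tmul c x => rw [cplxExt_tmul, extendC_tmul, extendC_tmul, hα x]; ring
  | add u v hu hv => simp only [map_add, hu, hv]; ring

lemma extendC_cplxExt' {j : E →ₗ[ℝ] E} {α : E →ₗ[ℝ] ℂ} (hα : α ∈ Lam01 j) (Z : ℂ ⊗[ℝ] E) :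
    extendC α (cplxExt j Z) = -(Complex.I * extendC α Z) := by
  induction Z using TensorProduct.induction_on with
  | zero => simp
  | tmul c x => rw [cplxExt_tmul, extendC_tmul, extendC_tmul, hα x]; ring
  | add u v hu hv => simp only [map_add, hu, hv]; ring

/-- `Λ^{1,0}` kills `E^{0,1}` -/
lemma extendC_eq_zero_10_01 {j : E →ₗ[ℝ] E} {α : E →ₗ[ℝ] ℂ} (hα : α ∈ Lam10 j)
    {Z : ℂ ⊗[ℝ] E} (hZ : Z ∈ E01 j) : extendC α Z = 0 := by
  have h1 := extendC_cplxExt hα Z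
  rw [mem_E01.mp hZ] at h1
  simp only [map_neg, map_smul, smul_eq_mul] at h1
  have : (2*Complex.I) * extendC α Z = 0 := by rw [two_mul]; linear_combination -h1
  simpa [Complex.I_ne_zero] using mul_eq_zero.mp this

/-- `Λ^{0,1}` kills `E^{1,0}` -/
lemma extendC_eq_zero_01_10 {j : E →ₗ[ℝ] E} {α : E →ₗ[ℝ] ℂ} (hα : α ∈ Lam01 j)
    {Z : ℂ ⊗[ℝ] E} (hZ : Z ∈ E10 j) : extendC α Z = 0 := by
  have h1 := extendC_cplxExt' hα Z
  rw [mem_E10.mp hZ] at h1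
  simp only [map_smul, smul_eq_mul] at h1
  have : (2*Complex.I) * extendC α Z = 0 := by rw [two_mul]; linear_combination h1
  simpa [Complex.I_ne_zero] using mul_eq_zero.mp this

lemma mem_Lam10 {j : E →ₗ[ℝ] E} {α : E →ₗ[ℝ] ℂ} :
    α ∈ Lam10 j ↔ ∀ x : E, α (j x) = Complex.I * α x := Iff.rfl

lemma mem_Lam01 {j : E →ₗ[ℝ] E} {α : E →ₗ[ℝ] ℂ} :
    α ∈ Lam01 j ↔ ∀ x : E, α (j x) = -(Complex.I * α x) := Iff.rfl

/-- The `(1,0)`-projection. -/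
def proj10 (j : E →ₗ[ℝ] E) : (ℂ ⊗[ℝ] E) →ₗ[ℂ] (ℂ ⊗[ℝ] E) :=
  (2⁻¹ : ℂ) • (LinearMap.id - Complex.I • (cplxExt j : (ℂ ⊗[ℝ] E) →ₗ[ℂ] (ℂ ⊗[ℝ] E)))

lemma proj10_apply (j : E →ₗ[ℝ] E) (Z : ℂ ⊗[ℝ] E) :
    proj10 j Z = (2⁻¹ : ℂ) • (Z - Complex.I • cplxExt j Z) := rfl

lemma proj10_cplxExt {j : E →ₗ[ℝ] E} (hj : IsCplxStruct j) (Z : ℂ ⊗[ℝ] E) :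
    proj10 j (cplxExt j Z) = Complex.I • proj10 j Z := by
  simp only [proj10_apply, cplxExt_sq hj]
  match_scalars <;> (first | ring1 | linear_combination (-1/2 : ℂ) * Complex.I_sq | linear_combination (1/2 : ℂ) * Complex.I_sq)

lemma proj10_of_mem_E10 {j : E →ₗ[ℝ] E} {Z : ℂ ⊗[ℝ] E} (hZ : Z ∈ E10 j) :
    proj10 j Z = Z := by
  rw [proj10_apply, mem_E10.mp hZ]
  match_scalars <;> (first | ring1 | linear_combination (-1/2 : ℂ) * Complex.I_sq | linear_combination (1/2 : ℂ) * Complex.I_sq)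

/-- `Λ^{1,0}_j` separates points of `E^{1,0}_j`. -/
lemma sep10 {j : E →ₗ[ℝ] E} (hj : IsCplxStruct j) {Z : ℂ ⊗[ℝ] E} (hZ : Z ∈ E10 j)
    (h : ∀ α ∈ Lam10 j, extendC α Z = 0) : Z = 0 := by
  rw [← Module.forall_dual_apply_eq_zero_iff ℂ Z]
  intro β
  set γ : E →ₗ[ℝ] ℂ :=
    (β.restrictScalars ℝ) ∘ₗ ((proj10 j).restrictScalars ℝ) ∘ₗ
      ((TensorProduct.mk ℝ ℂ E) 1) with hγdef
  have hγap : ∀ x : E, γ x = β (proj10 j ((1 : ℂ) ⊗ₜ x)) := fun x => rfl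
  have hγ : γ ∈ Lam10 j := by
    rw [mem_Lam10]
    intro x
    rw [hγap, hγap]
    have h1 : (1 : ℂ) ⊗ₜ[ℝ] (j x) = cplxExt j ((1:ℂ) ⊗ₜ x) := (cplxExt_tmul j 1 x).symm
    rw [h1, proj10_cplxExt hj, map_smul, smul_eq_mul]
  have hext : ∀ W : ℂ ⊗[ℝ] E, extendC γ W = β (proj10 j W) := by
    intro W
    induction W using TensorProduct.induction_on with
    | zero => simp
    | tmul c x =>
      rw [extendC_tmul, hγap]
      rw [show (c : ℂ) ⊗ₜ[ℝ] x = c • ((1:ℂ) ⊗ₜ x) by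
        rw [TensorProduct.smul_tmul', smul_eq_mul, mul_one]]
      rw [map_smul, map_smul, smul_eq_mul]
    | add u v hu hv => simp only [map_add, hu, hv]
  have := h γ hγ
  rw [hext, proj10_of_mem_E10 hZ] at this
  exact this

/-- membership in `E^{0,1}_j` is detected by `Λ^{1,0}_j`. -/
lemma mem_E01_iff_forms {j : E →ₗ[ℝ] E} (hj : IsCplxStruct j) {Z : ℂ ⊗[ℝ] E} :
    Z ∈ E01 j ↔ ∀ α ∈ Lam10 j, extendC α Z = 0 := by
  constructor
  · intro hZ α hα
    exact extendC_eq_zero_10_01 hα hZ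
  · intro h
    obtain ⟨U, hU, V, hV, rfl⟩ := decomp hj Z
    have hU0 : U = 0 := by
      refine sep10 hj hU fun α hα => ?_
      have := h α hα
      rw [map_add, extendC_eq_zero_10_01 hα hV, add_zero] at this
      exact this
    rw [hU0, zero_add]
    exact hV

-- ### conjugation

lemma conjTensor_tmul (c : ℂ) (x : E) :
    conjTensor (c ⊗ₜ x) = ((starRingEnd ℂ) c) ⊗ₜ x := by
  simp [conjTensor]

lemma conjTensor_conjTensor (Z : ℂ ⊗[ℝ] E) : conjTensor (conjTensor Z) = Z := by
  induction Z using TensorProduct.induction_on with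
  | zero => simp
  | tmul c x => simp [conjTensor_tmul]
  | add u v hu hv => simp only [map_add, hu, hv]

lemma conjTensor_smul (c : ℂ) (Z : ℂ ⊗[ℝ] E) :
    conjTensor (c • Z) = ((starRingEnd ℂ) c) • conjTensor Z := by
  induction Z using TensorProduct.induction_on with
  | zero => simp
  | tmul a x =>
    rw [TensorProduct.smul_tmul', conjTensor_tmul, conjTensor_tmul, TensorProduct.smul_tmul',
      smul_eq_mul, smul_eq_mul, map_mul]
  | add u v hu hv => simp only [smul_add, map_add, hu, hv]

lemma conjTensor_cplxExt (j : E →ₗ[ℝ] E) (Z : ℂ ⊗[ℝ] E) :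
    conjTensor (cplxExt j Z) = cplxExt j (conjTensor Z) := by
  induction Z using TensorProduct.induction_on with
  | zero => simp
  | tmul c x => rw [cplxExt_tmul, conjTensor_tmul, conjTensor_tmul, cplxExt_tmul]
  | add u v hu hv => simp only [map_add, hu, hv]

lemma conj_mem_E01 {j : E →ₗ[ℝ] E} {Z : ℂ ⊗[ℝ] E} (hZ : Z ∈ E10 j) :
    conjTensor Z ∈ E01 j := by
  rw [mem_E01, ← conjTensor_cplxExt, mem_E10.mp hZ, conjTensor_smul]
  simp

lemma omC_conj (ω : LinearMap.BilinForm ℝ E) (Z W : ℂ ⊗[ℝ] E) :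
    omC ω (conjTensor Z) (conjTensor W) = (starRingEnd ℂ) (omC ω Z W) := by
  induction Z using TensorProduct.induction_on with
  | zero => simp
  | tmul a x =>
    induction W using TensorProduct.induction_on with
    | zero => simp
    | tmul b y =>
      rw [conjTensor_tmul, conjTensor_tmul, omC_tmul, omC_tmul, map_mul, map_mul]
      congr 1
      rw [Complex.conj_ofReal]
    | add u v hu hv => simp only [map_add, hu, hv]
  | add u v hu hv => simp only [map_add, LinearMap.add_apply, hu, hv]

-- ### compatibility and isotropy

lemma omC_compat {ω : LinearMap.BilinForm ℝ E} {j : E →ₗ[ℝ] E} (hc : OmCompat ω j)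
    (Z W : ℂ ⊗[ℝ] E) : omC ω (cplxExt j Z) (cplxExt j W) = omC ω Z W := by
  induction Z using TensorProduct.induction_on with
  | zero => simp
  | tmul a x =>
    induction W using TensorProduct.induction_on with
    | zero => simp
    | tmul b y => rw [cplxExt_tmul, cplxExt_tmul, omC_tmul, omC_tmul, hc x y]
    | add u v hu hv => simp only [map_add, hu, hv]
  | add u v hu hv => simp only [map_add, LinearMap.add_apply, hu, hv]

lemma iso01_of_compat {ω : LinearMap.BilinForm ℝ E} {j : E →ₗ[ℝ] E} (hc : OmCompat ω j)
    {Z W : ℂ ⊗[ℝ] E} (hZ : Z ∈ E01 j) (hW : W ∈ E01 j) : omC ω Z W = 0 := by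
  have h := omC_compat hc Z W
  rw [mem_E01.mp hZ, mem_E01.mp hW] at h
  simp only [map_neg, map_smul, LinearMap.neg_apply, LinearMap.smul_apply, smul_eq_mul,
    neg_neg] at h
  have h2 : (2 : ℂ) * omC ω Z W = 0 := by
    linear_combination (omC ω Z W) * Complex.I_sq - h
  simpa using mul_eq_zero.mp h2

lemma iso10_of_compat {ω : LinearMap.BilinForm ℝ E} {j : E →ₗ[ℝ] E} (hc : OmCompat ω j)
    {Z W : ℂ ⊗[ℝ] E} (hZ : Z ∈ E10 j) (hW : W ∈ E10 j) : omC ω Z W = 0 := by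
  have h := omC_compat hc Z W
  rw [mem_E10.mp hZ, mem_E10.mp hW] at h
  simp only [map_smul, LinearMap.smul_apply, smul_eq_mul] at h
  have h2 : (2 : ℂ) * omC ω Z W = 0 := by
    linear_combination (omC ω Z W) * Complex.I_sq - h
  simpa using mul_eq_zero.mp h2

lemma compat_of_iso01 {ω : LinearMap.BilinForm ℝ E} {j : E →ₗ[ℝ] E} (hj : IsCplxStruct j)
    (h01 : ∀ Z W : ℂ ⊗[ℝ] E, Z ∈ E01 j → W ∈ E01 j → omC ω Z W = 0) : OmCompat ω j := by
  have h10 : ∀ Z W : ℂ ⊗[ℝ] E, Z ∈ E10 j → W ∈ E10 j → omC ω Z W = 0 := by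
    intro Z W hZ hW
    have := h01 _ _ (conj_mem_E01 hZ) (conj_mem_E01 hW)
    rw [omC_conj] at this
    simpa using congrArg (starRingEnd ℂ) this
  intro x y
  obtain ⟨u₁, hu₁, v₁, hv₁, hx⟩ := decomp hj ((1:ℂ) ⊗ₜ[ℝ] x)
  obtain ⟨u₂, hu₂, v₂, hv₂, hy⟩ := decomp hj ((1:ℂ) ⊗ₜ[ℝ] y)
  have key : omC ω (cplxExt j ((1:ℂ) ⊗ₜ[ℝ] x)) (cplxExt j ((1:ℂ) ⊗ₜ[ℝ] y)) =
      omC ω ((1:ℂ) ⊗ₜ[ℝ] x) ((1:ℂ) ⊗ₜ[ℝ] y) := by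
    rw [hx, hy]
    have e1 := h10 u₁ u₂ hu₁ hu₂
    have e2 := h01 v₁ v₂ hv₁ hv₂
    have j1 : cplxExt j (u₁ + v₁) = Complex.I • u₁ - Complex.I • v₁ := by
      rw [map_add, mem_E10.mp hu₁, mem_E01.mp hv₁, sub_eq_add_neg]
    have j2 : cplxExt j (u₂ + v₂) = Complex.I • u₂ - Complex.I • v₂ := by
      rw [map_add, mem_E10.mp hu₂, mem_E01.mp hv₂, sub_eq_add_neg]
    rw [j1, j2]
    simp only [map_sub, map_add, map_smul, LinearMap.sub_apply, LinearMap.add_apply,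
      LinearMap.smul_apply, smul_eq_mul]
    linear_combination (Complex.I^2 - 1) * e1 + (Complex.I^2 - 1) * e2 -
      (omC ω u₁ v₂ + omC ω v₁ u₂) * Complex.I_sq
  rw [cplxExt_tmul, cplxExt_tmul, omC_tmul, omC_tmul] at key
  have : ((ω (j x)) (j y) : ℂ) = ((ω x) y : ℂ) := by
    simpa using key
  exact_mod_cast this

-- ### the graph characterization of `E01 j`

lemma E01_graph {j₀ j : E →ₗ[ℝ] E} (hj₀ : IsCplxStruct j₀) (hj : IsCplxStruct j)
    (μ : Lam10 j₀ →ₗ[ℂ] Lam01 j₀)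
    (hgraph : ∀ γ : E →ₗ[ℝ] ℂ, γ ∈ Lam10 j ↔
      ∃ α : Lam10 j₀, γ = (α : E →ₗ[ℝ] ℂ) + ((μ α : E →ₗ[ℝ] ℂ)))
    (μt : E01 j₀ →ₗ[ℂ] E10 j₀)
    (hμt : ∀ (α : Lam10 j₀) (X : E01 j₀),
      extendC (α : E →ₗ[ℝ] ℂ) ((μt X : ℂ ⊗[ℝ] E)) =
        extendC ((μ α : E →ₗ[ℝ] ℂ)) ((X : ℂ ⊗[ℝ] E)))
    (Z : ℂ ⊗[ℝ] E) :
    Z ∈ E01 j ↔ ∃ X : E01 j₀, Z = (X : ℂ ⊗[ℝ] E) - ((μt X : ℂ ⊗[ℝ] E)) := by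
  constructor
  · intro hZ
    obtain ⟨U, hU, V, hV, rfl⟩ := decomp hj₀ Z
    set Xv : E01 j₀ := ⟨V, hV⟩ with hXv
    have hW : U + ((μt Xv : ℂ ⊗[ℝ] E)) ∈ E10 j₀ := Submodule.add_mem _ hU (μt Xv).2
    have hW0 : U + ((μt Xv : ℂ ⊗[ℝ] E)) = 0 := by
      refine sep10 hj₀ hW fun α hα => ?_
      set αs : Lam10 j₀ := ⟨α, hα⟩ with hαs
      have hγ : (α + ((μ αs : E →ₗ[ℝ] ℂ))) ∈ Lam10 j := (hgraph _).mpr ⟨αs, rfl⟩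
      have h0 : extendC (α + ((μ αs : E →ₗ[ℝ] ℂ))) (U + V) = 0 :=
        extendC_eq_zero_10_01 hγ hZ
      rw [map_add, extendC_add, extendC_add] at h0
      have z1 : extendC α V = 0 := extendC_eq_zero_10_01 hα hV
      have z2 : extendC ((μ αs : E →ₗ[ℝ] ℂ)) U = 0 := extendC_eq_zero_01_10 (μ αs).2 hU
      have z3 := hμt αs Xv
      rw [map_add, z3]
      linear_combination h0 - z1 - z2
    refine ⟨Xv, ?_⟩
    have hU' : U = -((μt Xv : ℂ ⊗[ℝ] E)) := eq_neg_of_add_eq_zero_left hW0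
    rw [hU']
    show -((μt Xv : ℂ ⊗[ℝ] E)) + V = V - ((μt Xv : ℂ ⊗[ℝ] E))
    abel
  · rintro ⟨X, rfl⟩
    rw [mem_E01_iff_forms hj]
    intro γ hγ
    obtain ⟨α, rfl⟩ := (hgraph γ).mp hγ
    have z1 : extendC (α : E →ₗ[ℝ] ℂ) ((X : ℂ ⊗[ℝ] E)) = 0 :=
      extendC_eq_zero_10_01 α.2 X.2
    have z2 : extendC ((μ α : E →ₗ[ℝ] ℂ)) ((μt X : ℂ ⊗[ℝ] E)) = 0 :=
      extendC_eq_zero_01_10 (μ α).2 (μt X).2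
    have z3 := hμt α X
    rw [extendC_add, map_sub, map_sub]
    linear_combination z1 - z3 - z2


/-- `j` is compatible with `ω` iff
`ω(μᵗX, Y) + ω(X, μᵗY) = 0` for all `X, Y ∈ E^{0,1}_{j₀}`. -/
theorem statement8 {E : Type*} [AddCommGroup E] [Module ℝ E] [FiniteDimensional ℝ E]
    (n : ℕ) (hn : 0 < n) (ω : LinearMap.BilinForm ℝ E)
    (hdim : Module.finrank ℝ E = 2 * n)
    (halt : OmAlt ω) (hnd : OmNondeg ω)
    (j₀ : E →ₗ[ℝ] E) (hj₀ : IsCplxStruct j₀)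
    (hc₀ : OmCompat ω j₀) (hp₀ : OmPos ω j₀)
    (j : E →ₗ[ℝ] E) (hj : IsCplxStruct j)
    -- `Λ^{1,0}_j E*` is the graph of `μ : Λ^{1,0}_{j₀}E* → Λ^{0,1}_{j₀}E*`
    (μ : Lam10 j₀ →ₗ[ℂ] Lam01 j₀)
    (hgraph : ∀ γ : E →ₗ[ℝ] ℂ, γ ∈ Lam10 j ↔
      ∃ α : Lam10 j₀, γ = (α : E →ₗ[ℝ] ℂ) + ((μ α : E →ₗ[ℝ] ℂ)))
    -- `μᵗ : E^{0,1}_{j₀} → E^{1,0}_{j₀}` is the transpose of `μ`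
    (μt : E01 j₀ →ₗ[ℂ] E10 j₀)
    (hμt : ∀ (α : Lam10 j₀) (X : E01 j₀),
      extendC (α : E →ₗ[ℝ] ℂ) ((μt X : ℂ ⊗[ℝ] E)) =
        extendC ((μ α : E →ₗ[ℝ] ℂ)) ((X : ℂ ⊗[ℝ] E))) :
    OmCompat ω j ↔
      ∀ X Y : E01 j₀,
        omC ω ((μt X : ℂ ⊗[ℝ] E)) ((Y : ℂ ⊗[ℝ] E)) +
          omC ω ((X : ℂ ⊗[ℝ] E)) ((μt Y : ℂ ⊗[ℝ] E)) = 0 := by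
  have char := E01_graph hj₀ hj μ hgraph μt hμt
  constructor
  · intro hc X Y
    have hZ : ((X : ℂ ⊗[ℝ] E) - ((μt X : ℂ ⊗[ℝ] E))) ∈ E01 j := (char _).mpr ⟨X, rfl⟩
    have hW : ((Y : ℂ ⊗[ℝ] E) - ((μt Y : ℂ ⊗[ℝ] E))) ∈ E01 j := (char _).mpr ⟨Y, rfl⟩
    have h0 := iso01_of_compat hc hZ hW
    have e1 : omC ω ((X : ℂ ⊗[ℝ] E)) ((Y : ℂ ⊗[ℝ] E)) = 0 := iso01_of_compat hc₀ X.2 Y.2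
    have e2 : omC ω ((μt X : ℂ ⊗[ℝ] E)) ((μt Y : ℂ ⊗[ℝ] E)) = 0 :=
      iso10_of_compat hc₀ (μt X).2 (μt Y).2
    simp only [map_sub, LinearMap.sub_apply] at h0
    linear_combination e1 + e2 - h0
  · intro h
    refine compat_of_iso01 hj fun Z W hZ hW => ?_
    obtain ⟨X, rfl⟩ := (char Z).mp hZ
    obtain ⟨Y, rfl⟩ := (char W).mp hW
    have h0 := h X Y
    have e1 : omC ω ((X : ℂ ⊗[ℝ] E)) ((Y : ℂ ⊗[ℝ] E)) = 0 := iso01_of_compat hc₀ X.2 Y.2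
    have e2 : omC ω ((μt X : ℂ ⊗[ℝ] E)) ((μt Y : ℂ ⊗[ℝ] E)) = 0 :=
      iso10_of_compat hc₀ (μt X).2 (μt Y).2
    simp only [map_sub, LinearMap.sub_apply]
    linear_combination e1 + e2 - h0


end
end
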